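/- (Symplectic property of the monodromy map, $n=3$ case.) For parameters $(\gamma_0,\gamma_1)$ with $|\gamma_i-\gamma_j|<2$, define $m_i=-\gamma_i/2$ and $\log e_i^{\mathbb{R}} = \rho_i + 2\gamma_i\log 2 + \log X_{3-i}(\gamma) - \log X_i(\gamma)$ for $i=0,1$, where $\gamma=(\gamma_0,\gamma_1,-\gamma_1,-\gamma_0)$ and $X_k(\gamma_0,\dots,\gamma_3)=\prod_{j=1}^{3}\Gamma\big(\tfrac{\gamma_k-\gamma_{k+j}+2j}{8}\big)$ (indices mod 4). Then, as 2-forms on the $(\gamma_0,\gamma_1,\rho_0,\rho_1)$-space, $-\tfrac{1}{2}\big(d\gamma_0\wedge d\rho_0 + d\gamma_1\wedge d\rho_1\big) = dm_0\wedge d\log e_0^{\mathbb{R}} + dm_1\wedge d\log e_1^{\mathbb{R}}$. -/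
import Mathlib


open Real

/-- The antisymmetric extension `γ = (γ₀, γ₁, -γ₁, -γ₀)` (indices in `ZMod 4`),
as a function of the coordinates `p = (γ₀, γ₁, ρ₀, ρ₁)` on `ℝ⁴`. -/
def gamext (p : Fin 4 → ℝ) : ZMod 4 → ℝ := fun i =>
  if i = 0 then p 0 else if i = 1 then p 1 else if i = 2 then -(p 1) else -(p 0)

/-- `X_k(γ₀,…,γ₃) = ∏_{j=1}^3 Γ((γ_k - γ_{k+j} + 2j)/8)`, indices mod 4. -/
noncomputable def Xg (γ : ZMod 4 → ℝ) (k : ZMod 4) : ℝ :=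
  ∏ j ∈ Finset.range 3, Real.Gamma ((γ k - γ (k + (j + 1 : ℕ)) + 2 * ((j : ℝ) + 1)) / 8)

/-- `m₀ = -γ₀/2` as a function on the `(γ₀,γ₁,ρ₀,ρ₁)`-space. -/
noncomputable def mc0 (p : Fin 4 → ℝ) : ℝ := -(p 0) / 2
/-- `m₁ = -γ₁/2` as a function on the `(γ₀,γ₁,ρ₀,ρ₁)`-space. -/
noncomputable def mc1 (p : Fin 4 → ℝ) : ℝ := -(p 1) / 2
/-- `log e₀^ℝ = ρ₀ + 2γ₀ log 2 + log X₃(γ) - log X₀(γ)`. -/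
noncomputable def le0 (p : Fin 4 → ℝ) : ℝ :=
  p 2 + 2 * p 0 * Real.log 2 + Real.log (Xg (gamext p) 3) - Real.log (Xg (gamext p) 0)
/-- `log e₁^ℝ = ρ₁ + 2γ₁ log 2 + log X₂(γ) - log X₁(γ)`. -/
noncomputable def le1 (p : Fin 4 → ℝ) : ℝ :=
  p 3 + 2 * p 1 * Real.log 2 + Real.log (Xg (gamext p) 2) - Real.log (Xg (gamext p) 1)

/-- Explicit expansion of `Xg (gamext p) 3`. -/
lemma Xg3_eq (p : Fin 4 → ℝ) : Xg (gamext p) 3 =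
    Real.Gamma ((2 - 2*p 0)/8) * Real.Gamma ((4 - p 0 - p 1)/8) * Real.Gamma ((6 - p 0 + p 1)/8) := by
  simp (config := { decide := true }) [Xg, Finset.prod_range_succ, gamext]; norm_num; ring_nf

/-- Explicit expansion of `Xg (gamext p) 0`. -/
lemma Xg0_eq (p : Fin 4 → ℝ) : Xg (gamext p) 0 =
    Real.Gamma ((2 + p 0 - p 1)/8) * Real.Gamma ((4 + p 0 + p 1)/8) * Real.Gamma ((6 + 2*p 0)/8) := by
  simp (config := { decide := true }) [Xg, Finset.prod_range_succ, gamext]; norm_num; ring_nf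

/-- Explicit expansion of `Xg (gamext p) 2`. -/
lemma Xg2_eq (p : Fin 4 → ℝ) : Xg (gamext p) 2 =
    Real.Gamma ((2 + p 0 - p 1)/8) * Real.Gamma ((4 - p 0 - p 1)/8) * Real.Gamma ((6 - 2*p 1)/8) := by
  simp (config := { decide := true }) [Xg, Finset.prod_range_succ, gamext]; norm_num; ring_nf

/-- Explicit expansion of `Xg (gamext p) 1`. -/
lemma Xg1_eq (p : Fin 4 → ℝ) : Xg (gamext p) 1 =
    Real.Gamma ((2 + 2*p 1)/8) * Real.Gamma ((4 + p 0 + p 1)/8) * Real.Gamma ((6 - p 0 + p 1)/8) := by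
  simp (config := { decide := true }) [Xg, Finset.prod_range_succ, gamext]; norm_num; ring_nf

/-- `log ∘ Γ` is differentiable at positive points. -/
lemma hlg (t : ℝ) (ht : 0 < t) : HasDerivAt (fun s => Real.log (Real.Gamma s))
    (deriv (fun s => Real.log (Real.Gamma s)) t) t := by
  have h1 : DifferentiableAt ℝ Real.Gamma t :=
    Real.differentiableAt_Gamma (fun m => by
      have := Nat.cast_nonneg (α := ℝ) m; exact ne_of_gt (by linarith))
  exact ((h1.log (Real.Gamma_pos_of_pos ht).ne')).hasDerivAt

/-- Fréchet derivative of `q ↦ log Γ(c + d q₀ + e q₁)` on `ℝ⁴`. -/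
lemma key (p : Fin 4 → ℝ) (c d e : ℝ) (h : 0 < c + d * p 0 + e * p 1) :
    HasFDerivAt (fun q : Fin 4 → ℝ => Real.log (Real.Gamma (c + d * q 0 + e * q 1)))
      ((deriv (fun s => Real.log (Real.Gamma s)) (c + d * p 0 + e * p 1)) •
        ((0 : (Fin 4 → ℝ) →L[ℝ] ℝ) + d • ContinuousLinearMap.proj 0 +
          e • ContinuousLinearMap.proj 1)) p := by
  have haff : HasFDerivAt (fun q : Fin 4 → ℝ => c + d * q 0 + e * q 1)
      ((0 : (Fin 4 → ℝ) →L[ℝ] ℝ) + d • ContinuousLinearMap.proj 0 +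
        e • ContinuousLinearMap.proj 1) p :=
    ((hasFDerivAt_const c p).add ((hasFDerivAt_apply 0 p).const_mul d)).add
      ((hasFDerivAt_apply 1 p).const_mul e)
  exact (hlg _ h).comp_hasFDerivAt p haff

/-- Strict positivity of an affine function is stable in a neighbourhood. -/
lemma hev (p : Fin 4 → ℝ) (c d e : ℝ) (h : 0 < c + d * p 0 + e * p 1) :
    ∀ᶠ q in nhds p, 0 < c + d * q 0 + e * q 1 := by
  have hc : Continuous (fun q : Fin 4 → ℝ => c + d * q 0 + e * q 1) := by
    continuity
  have ho : IsOpen {q : Fin 4 → ℝ | 0 < c + d * q 0 + e * q 1} :=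
    isOpen_lt continuous_const hc
  exact ho.mem_nhds h

set_option maxHeartbeats 2000000 in
/-- Symplectic property of the monodromy map (`n = 3` case): as 2-forms on the
`(γ₀,γ₁,ρ₀,ρ₁)`-space,
`-(1/2)(dγ₀∧dρ₀ + dγ₁∧dρ₁) = dm₀∧d(log e₀^ℝ) + dm₁∧d(log e₁^ℝ)`. -/
theorem stmt10 (p : Fin 4 → ℝ)
    (hpos : ∀ k : ZMod 4, ∀ j ∈ Finset.range 3,
      0 < (gamext p k - gamext p (k + (j + 1 : ℕ)) + 2 * ((j : ℝ) + 1)) / 8) :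
    ∀ u v : Fin 4 → ℝ,
      -(1/2) * ((u 0 * v 2 - v 0 * u 2) + (u 1 * v 3 - v 1 * u 3))
        = (fderiv ℝ mc0 p u * fderiv ℝ le0 p v - fderiv ℝ mc0 p v * fderiv ℝ le0 p u)
          + (fderiv ℝ mc1 p u * fderiv ℝ le1 p v - fderiv ℝ mc1 p v * fderiv ℝ le1 p u) := by
  intro u v
  -- positivity of the eight affine arguments at p
  have hA1 : (0:ℝ) < 2/8 + (-2/8) * p 0 + 0 * p 1 := by
    have h := hpos 3 0 (by decide)
    simp (config := {decide := true}) [gamext] at h; norm_num at h ⊢; linarith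
  have hA2 : (0:ℝ) < 4/8 + (-1/8) * p 0 + (-1/8) * p 1 := by
    have h := hpos 3 1 (by decide)
    simp (config := {decide := true}) [gamext] at h; norm_num at h ⊢; linarith
  have hA3 : (0:ℝ) < 6/8 + (-1/8) * p 0 + (1/8) * p 1 := by
    have h := hpos 3 2 (by decide)
    simp (config := {decide := true}) [gamext] at h; norm_num at h ⊢; linarith
  have hA4 : (0:ℝ) < 2/8 + (1/8) * p 0 + (-1/8) * p 1 := by
    have h := hpos 0 0 (by decide)
    simp (config := {decide := true}) [gamext] at h; norm_num at h ⊢; linarith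
  have hA5 : (0:ℝ) < 4/8 + (1/8) * p 0 + (1/8) * p 1 := by
    have h := hpos 0 1 (by decide)
    simp (config := {decide := true}) [gamext] at h; norm_num at h ⊢; linarith
  have hA6 : (0:ℝ) < 6/8 + (2/8) * p 0 + 0 * p 1 := by
    have h := hpos 0 2 (by decide)
    simp (config := {decide := true}) [gamext] at h; norm_num at h ⊢; linarith
  have hA7 : (0:ℝ) < 6/8 + 0 * p 0 + (-2/8) * p 1 := by
    have h := hpos 2 2 (by decide)
    simp (config := {decide := true}) [gamext] at h; norm_num at h ⊢; linarith
  have hA8 : (0:ℝ) < 2/8 + 0 * p 0 + (2/8) * p 1 := by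
    have h := hpos 1 0 (by decide)
    simp (config := {decide := true}) [gamext] at h; norm_num at h ⊢; linarith
  -- derivatives of mc0, mc1
  have Hm0 : HasFDerivAt mc0 ((-(1:ℝ)/2) • (ContinuousLinearMap.proj 0 : (Fin 4 → ℝ) →L[ℝ] ℝ)) p :=
    ((hasFDerivAt_apply 0 p).const_mul (-(1:ℝ)/2)).congr_of_eventuallyEq
      (Filter.Eventually.of_forall fun q => by simp only [mc0]; ring)
  have Hm1 : HasFDerivAt mc1 ((-(1:ℝ)/2) • (ContinuousLinearMap.proj 1 : (Fin 4 → ℝ) →L[ℝ] ℝ)) p :=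
    ((hasFDerivAt_apply 1 p).const_mul (-(1:ℝ)/2)).congr_of_eventuallyEq
      (Filter.Eventually.of_forall fun q => by simp only [mc1]; ring)
  -- derivative of le0
  have H0 := (((((((hasFDerivAt_apply 2 p).add
      ((hasFDerivAt_apply 0 p).const_mul (2*Real.log 2))).add
      (key p (2/8) (-2/8) 0 hA1)).add (key p (4/8) (-1/8) (-1/8) hA2)).add
      (key p (6/8) (-1/8) (1/8) hA3)).sub (key p (2/8) (1/8) (-1/8) hA4)).sub
      (key p (4/8) (1/8) (1/8) hA5)).sub (key p (6/8) (2/8) 0 hA6)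
  have He0 : le0 =ᶠ[nhds p] (fun q : Fin 4 → ℝ =>
      q 2 + 2*Real.log 2 * q 0
        + Real.log (Real.Gamma (2/8 + -2/8 * q 0 + 0 * q 1))
        + Real.log (Real.Gamma (4/8 + -1/8 * q 0 + -1/8 * q 1))
        + Real.log (Real.Gamma (6/8 + -1/8 * q 0 + 1/8 * q 1))
        - Real.log (Real.Gamma (2/8 + 1/8 * q 0 + -1/8 * q 1))
        - Real.log (Real.Gamma (4/8 + 1/8 * q 0 + 1/8 * q 1))
        - Real.log (Real.Gamma (6/8 + 2/8 * q 0 + 0 * q 1))) := by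
    filter_upwards [hev p (2/8) (-2/8) 0 hA1, hev p (4/8) (-1/8) (-1/8) hA2,
      hev p (6/8) (-1/8) (1/8) hA3, hev p (2/8) (1/8) (-1/8) hA4,
      hev p (4/8) (1/8) (1/8) hA5, hev p (6/8) (2/8) 0 hA6] with q h1 h2 h3 h4 h5 h6
    have g1 : Real.Gamma ((2 - 2*q 0)/8) ≠ 0 := (Real.Gamma_pos_of_pos (by linarith)).ne'
    have g2 : Real.Gamma ((4 - q 0 - q 1)/8) ≠ 0 := (Real.Gamma_pos_of_pos (by linarith)).ne'
    have g3 : Real.Gamma ((6 - q 0 + q 1)/8) ≠ 0 := (Real.Gamma_pos_of_pos (by linarith)).ne'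
    have g4 : Real.Gamma ((2 + q 0 - q 1)/8) ≠ 0 := (Real.Gamma_pos_of_pos (by linarith)).ne'
    have g5 : Real.Gamma ((4 + q 0 + q 1)/8) ≠ 0 := (Real.Gamma_pos_of_pos (by linarith)).ne'
    have g6 : Real.Gamma ((6 + 2*q 0)/8) ≠ 0 := (Real.Gamma_pos_of_pos (by linarith)).ne'
    simp only [le0, Xg3_eq, Xg0_eq]
    rw [Real.log_mul (mul_ne_zero g1 g2) g3, Real.log_mul g1 g2,
      Real.log_mul (mul_ne_zero g4 g5) g6, Real.log_mul g4 g5]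
    ring_nf
  have Hle0 := H0.congr_of_eventuallyEq He0
  -- derivative of le1
  have H1 := (((((((hasFDerivAt_apply 3 p).add
      ((hasFDerivAt_apply 1 p).const_mul (2*Real.log 2))).add
      (key p (2/8) (1/8) (-1/8) hA4)).add (key p (4/8) (-1/8) (-1/8) hA2)).add
      (key p (6/8) 0 (-2/8) hA7)).sub (key p (2/8) 0 (2/8) hA8)).sub
      (key p (4/8) (1/8) (1/8) hA5)).sub (key p (6/8) (-1/8) (1/8) hA3)
  have He1 : le1 =ᶠ[nhds p] (fun q : Fin 4 → ℝ =>
      q 3 + 2*Real.log 2 * q 1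
        + Real.log (Real.Gamma (2/8 + 1/8 * q 0 + -1/8 * q 1))
        + Real.log (Real.Gamma (4/8 + -1/8 * q 0 + -1/8 * q 1))
        + Real.log (Real.Gamma (6/8 + 0 * q 0 + -2/8 * q 1))
        - Real.log (Real.Gamma (2/8 + 0 * q 0 + 2/8 * q 1))
        - Real.log (Real.Gamma (4/8 + 1/8 * q 0 + 1/8 * q 1))
        - Real.log (Real.Gamma (6/8 + -1/8 * q 0 + 1/8 * q 1))) := by
    filter_upwards [hev p (2/8) (1/8) (-1/8) hA4, hev p (4/8) (-1/8) (-1/8) hA2,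
      hev p (6/8) 0 (-2/8) hA7, hev p (2/8) 0 (2/8) hA8,
      hev p (4/8) (1/8) (1/8) hA5, hev p (6/8) (-1/8) (1/8) hA3] with q h1 h2 h3 h4 h5 h6
    have g1 : Real.Gamma ((2 + q 0 - q 1)/8) ≠ 0 := (Real.Gamma_pos_of_pos (by linarith)).ne'
    have g2 : Real.Gamma ((4 - q 0 - q 1)/8) ≠ 0 := (Real.Gamma_pos_of_pos (by linarith)).ne'
    have g3 : Real.Gamma ((6 - 2*q 1)/8) ≠ 0 := (Real.Gamma_pos_of_pos (by linarith)).ne'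
    have g4 : Real.Gamma ((2 + 2*q 1)/8) ≠ 0 := (Real.Gamma_pos_of_pos (by linarith)).ne'
    have g5 : Real.Gamma ((4 + q 0 + q 1)/8) ≠ 0 := (Real.Gamma_pos_of_pos (by linarith)).ne'
    have g6 : Real.Gamma ((6 - q 0 + q 1)/8) ≠ 0 := (Real.Gamma_pos_of_pos (by linarith)).ne'
    simp only [le1, Xg2_eq, Xg1_eq]
    rw [Real.log_mul (mul_ne_zero g1 g2) g3, Real.log_mul g1 g2,
      Real.log_mul (mul_ne_zero g4 g5) g6, Real.log_mul g4 g5]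
    ring_nf
  have Hle1 := H1.congr_of_eventuallyEq He1
  rw [Hm0.fderiv, Hm1.fderiv, Hle0.fderiv, Hle1.fderiv]
  simp only [ContinuousLinearMap.add_apply, ContinuousLinearMap.sub_apply,
    ContinuousLinearMap.smul_apply, ContinuousLinearMap.zero_apply,
    ContinuousLinearMap.proj_apply, smul_eq_mul]
  ring_nf
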